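/- Let P be a pre-Garside structure. The elements of P have a common right multiple if and only if P is finite and every pair of atoms has a common (right) multiple. -/

import Mathlib

/-- An atomic partial product on a set `P`: a partial product (with values in
`Option P`) with a unit, associativity, a finite set of atoms, and an `ℕ`-grading. -/
structure AtomicPartialProduct (P : Type*) where
  mul : P → P → Option P
  one : P
  one_mul : ∀ a, mul one a = some a
  mul_one : ∀ a, mul a one = some a
  /-- `ab` and `(ab)c` are defined iff `bc` and `a(bc)` are defined. -/
  assoc_defined : ∀ a b c : P,
    (∃ ab, mul a b = some ab ∧ (mul ab c).isSome) ↔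
    (∃ bc, mul b c = some bc ∧ (mul a bc).isSome)
  /-- When both are defined, `(ab)c = a(bc)`. -/
  assoc : ∀ a b c ab bc x y : P, mul a b = some ab → mul b c = some bc →
    mul ab c = some x → mul a bc = some y → x = y
  /-- The product of two non-unit elements is a non-unit. -/
  ne_one_mul : ∀ a b c : P, a ≠ one → b ≠ one → mul a b = some c → c ≠ one
  /-- There are finitely many atoms. -/
  atoms_finite : {p : P | p ≠ one ∧ ∀ a b, a ≠ one → b ≠ one → mul a b ≠ some p}.Finite
  len : P → ℕ
  len_pos : ∀ p, p ≠ one → 0 < len p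
  len_mul : ∀ a b c, mul a b = some c → len c = len a + len b

namespace AtomicPartialProduct

variable {P : Type*} (S : AtomicPartialProduct P)

/-- The set of atoms: non-unit elements which are not products of non-units. -/
def atoms : Set P :=
  {p : P | p ≠ S.one ∧ ∀ a b, a ≠ S.one → b ≠ S.one → S.mul a b ≠ some p}

/-- The defining relations of the monoid `M(P)`: `a · b = c` whenever the partial
product `ab` is defined and equal to `c`. -/
def rel : FreeMonoid P → FreeMonoid P → Prop := fun u v =>
  ∃ a b c : P, S.mul a b = some c ∧
    u = FreeMonoid.of a * FreeMonoid.of b ∧ v = FreeMonoid.of c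

/-- The monoid `M(P)` presented by generators `P` and relations `ab = c` whenever
the partial product is defined. -/
def M := (conGen S.rel).Quotient

instance : Monoid S.M := inferInstanceAs (Monoid (conGen S.rel).Quotient)

/-- The natural map `P → M(P)`. -/
def ι (p : P) : S.M := (conGen S.rel).mk' (FreeMonoid.of p)

/-- `a` left-divides `c` in `P`. -/
def leftDvd (a c : P) : Prop := ∃ b, S.mul a b = some c

/-- `a` right-divides `c` in `P`. -/
def rightDvd (a c : P) : Prop := ∃ b, S.mul b a = some c

/-- `Δ` is a least common right multiple of `s` and `t` in `P`. -/
def IsRightLcm (s t Δ : P) : Prop :=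
  S.leftDvd s Δ ∧ S.leftDvd t Δ ∧ ∀ m, S.leftDvd s m → S.leftDvd t m → S.leftDvd Δ m

/-- `Δ` is a least common left multiple of `s` and `t` in `P`. -/
def IsLeftLcm (s t Δ : P) : Prop :=
  S.rightDvd s Δ ∧ S.rightDvd t Δ ∧ ∀ m, S.rightDvd s m → S.rightDvd t m → S.rightDvd Δ m

end AtomicPartialProduct

/-- A pre-Garside structure: an atomic partial product satisfying the lcm axioms
(iv), (iv'), the closure axiom (v) and the cancellativity axiom (vi). -/
structure PreGarside (P : Type*) extends AtomicPartialProduct P where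
  /-- (iv) two atoms with a common right multiple have a right lcm. -/
  lcm_right : ∀ s ∈ toAtomicPartialProduct.atoms, ∀ t ∈ toAtomicPartialProduct.atoms,
    (∃ m, toAtomicPartialProduct.leftDvd s m ∧ toAtomicPartialProduct.leftDvd t m) →
    ∃ Δ, toAtomicPartialProduct.IsRightLcm s t Δ
  /-- (iv') two atoms with a common left multiple have a left lcm. -/
  lcm_left : ∀ s ∈ toAtomicPartialProduct.atoms, ∀ t ∈ toAtomicPartialProduct.atoms,
    (∃ m, toAtomicPartialProduct.rightDvd s m ∧ toAtomicPartialProduct.rightDvd t m) →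
    ∃ Δ, toAtomicPartialProduct.IsLeftLcm s t Δ
  /-- (v) if `as` and `at` are defined then so is `aΔ_{s,t}`. -/
  mul_lcm_defined : ∀ s ∈ toAtomicPartialProduct.atoms, ∀ t ∈ toAtomicPartialProduct.atoms,
    ∀ Δ a : P, toAtomicPartialProduct.IsRightLcm s t Δ →
    (toAtomicPartialProduct.mul a s).isSome → (toAtomicPartialProduct.mul a t).isSome →
    (toAtomicPartialProduct.mul a Δ).isSome
  /-- (vi) elements of `P` are cancellable in `M(P)` (right cancellation). -/
  cancel_right : ∀ (m : toAtomicPartialProduct.M) (a b : P),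
    toAtomicPartialProduct.ι a * m = toAtomicPartialProduct.ι b * m → a = b
  /-- (vi) elements of `P` are cancellable in `M(P)` (left cancellation). -/
  cancel_left : ∀ (m : toAtomicPartialProduct.M) (a b : P),
    m * toAtomicPartialProduct.ι a = m * toAtomicPartialProduct.ι b → a = b

namespace AtomicPartialProduct

variable {P : Type*} (S : AtomicPartialProduct P)

lemma assoc₁ {a b c ab x : P} (hab : S.mul a b = some ab) (hx : S.mul ab c = some x) :
    ∃ bc, S.mul b c = some bc ∧ S.mul a bc = some x := by
  obtain ⟨bc, hbc, hy⟩ := (S.assoc_defined a b c).mp ⟨ab, hab, by rw [hx]; rfl⟩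
  obtain ⟨y, hy⟩ := Option.isSome_iff_exists.mp hy
  refine ⟨bc, hbc, ?_⟩
  rw [hy, S.assoc a b c ab bc x y hab hbc hx hy]

lemma assoc₂ {a b c bc x : P} (hbc : S.mul b c = some bc) (hx : S.mul a bc = some x) :
    ∃ ab, S.mul a b = some ab ∧ S.mul ab c = some x := by
  obtain ⟨ab, hab, hy⟩ := (S.assoc_defined a b c).mpr ⟨bc, hbc, by rw [hx]; rfl⟩
  obtain ⟨y, hy⟩ := Option.isSome_iff_exists.mp hy
  refine ⟨ab, hab, ?_⟩
  rw [hy, S.assoc a b c ab bc y x hab hbc hy hx]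

lemma leftDvd_refl (a : P) : S.leftDvd a a := ⟨S.one, S.mul_one a⟩

lemma one_leftDvd (a : P) : S.leftDvd S.one a := ⟨a, S.one_mul a⟩

lemma leftDvd_trans {a b c : P} (h1 : S.leftDvd a b) (h2 : S.leftDvd b c) :
    S.leftDvd a c := by
  obtain ⟨x, hx⟩ := h1
  obtain ⟨y, hy⟩ := h2
  obtain ⟨xy, _, hxy⟩ := S.assoc₁ hx hy
  exact ⟨xy, hxy⟩

lemma len_one : S.len S.one = 0 := by
  have := S.len_mul S.one S.one S.one (S.one_mul S.one)
  omega

lemma eq_one_of_len {p : P} (h : S.len p = 0) : p = S.one := by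
  by_contra hp
  exact absurd h (S.len_pos p hp).ne'

lemma len_le_of_leftDvd {a b : P} (h : S.leftDvd a b) : S.len a ≤ S.len b := by
  obtain ⟨x, hx⟩ := h
  have := S.len_mul a x b hx
  omega

lemma eq_of_leftDvd_of_len_le {a b : P} (h : S.leftDvd a b) (hl : S.len b ≤ S.len a) :
    b = a := by
  obtain ⟨x, hx⟩ := h
  have hlen := S.len_mul a x b hx
  have hx1 : x = S.one := S.eq_one_of_len (by omega)
  rw [hx1, S.mul_one] at hx
  exact (Option.some.inj hx).symm

/-- Every non-unit element has an atom as a left divisor, with complement. -/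
lemma exists_atom_mul : ∀ n (p : P), S.len p ≤ n → p ≠ S.one →
    ∃ s ∈ S.atoms, ∃ p', S.mul s p' = some p := by
  intro n
  induction n with
  | zero => intro p hp hp1; exact absurd (S.eq_one_of_len (Nat.le_zero.mp hp)) hp1
  | succ n ih =>
    intro p hp hp1
    by_cases hpa : p ∈ S.atoms
    · exact ⟨p, hpa, S.one, S.mul_one p⟩
    · have : ∃ a b, a ≠ S.one ∧ b ≠ S.one ∧ S.mul a b = some p := by
        by_contra hcon
        push_neg at hcon
        exact hpa ⟨hp1, fun a b ha hb => hcon a b ha hb⟩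
      obtain ⟨a, b, ha, hb, hab⟩ := this
      have hlen := S.len_mul a b p hab
      have hbpos := S.len_pos b hb
      obtain ⟨s, hs, a', ha'⟩ := ih a (by omega) ha
      obtain ⟨q, _, hq⟩ := S.assoc₁ ha' hab
      exact ⟨s, hs, q, hq⟩

/-- If `a` properly divides `b`, some `a·s` with `s` an atom still divides `b`. -/
lemma exists_atom_step {a b : P} (h : S.leftDvd a b) (hne : b ≠ a) :
    ∃ s ∈ S.atoms, ∃ a₁, S.mul a s = some a₁ ∧ S.leftDvd a₁ b := by
  obtain ⟨x, hx⟩ := h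
  have hx1 : x ≠ S.one := by
    rintro rfl
    rw [S.mul_one] at hx
    exact hne (Option.some.inj hx).symm
  obtain ⟨s, hs, x', hx'⟩ := S.exists_atom_mul (S.len x) x le_rfl hx1
  obtain ⟨a₁, ha₁, ha₁b⟩ := S.assoc₂ hx' hx
  exact ⟨s, hs, a₁, ha₁, x', ha₁b⟩

/-- A list evaluates in the partial product. -/
def eval : List P → Option P
  | [] => some S.one
  | a :: l => (eval l).bind (fun b => S.mul a b)

lemma eval_append : ∀ (u v : List P) (a b c : P), S.eval u = some a → S.eval v = some b →
    S.mul a b = some c → S.eval (u ++ v) = some c := by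
  intro u
  induction u with
  | nil =>
    intro v a b c ha hb hc
    simp only [eval] at ha
    obtain rfl : S.one = a := Option.some.inj ha
    rw [S.one_mul] at hc
    obtain rfl : b = c := Option.some.inj hc
    simpa using hb
  | cons x u' ih =>
    intro v a b c ha hb hc
    simp only [eval, Option.bind_eq_some_iff] at ha
    obtain ⟨a', ha', hxa'⟩ := ha
    obtain ⟨bc, hbc, hy⟩ := S.assoc₁ hxa' hc
    have := ih v a' b bc ha' hb hbc
    simp only [List.cons_append, eval, List.append_eq, this, Option.bind_some]
    exact hy

lemma exists_word : ∀ n (p : P), S.len p ≤ n →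
    ∃ w : List P, (∀ x ∈ w, x ∈ S.atoms) ∧ S.eval w = some p ∧ w.length ≤ S.len p := by
  intro n
  induction n with
  | zero =>
    intro p hp
    obtain rfl := S.eq_one_of_len (Nat.le_zero.mp hp)
    exact ⟨[], by simp, rfl, by simp⟩
  | succ n ih =>
    intro p hp
    by_cases hp1 : p = S.one
    · exact ⟨[], by simp, by rw [hp1]; rfl, by simp⟩
    by_cases hpa : p ∈ S.atoms
    · refine ⟨[p], by simpa using hpa, ?_, ?_⟩
      · simp only [eval, Option.bind_some, S.mul_one]
      · exact S.len_pos p hp1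
    · have : ∃ a b, a ≠ S.one ∧ b ≠ S.one ∧ S.mul a b = some p := by
        by_contra hcon
        push_neg at hcon
        exact hpa ⟨hp1, fun a b ha hb => hcon a b ha hb⟩
      obtain ⟨a, b, ha, hb, hab⟩ := this
      have hlen := S.len_mul a b p hab
      have hapos := S.len_pos a ha
      have hbpos := S.len_pos b hb
      obtain ⟨u, hu, hue, hul⟩ := ih a (by omega)
      obtain ⟨v, hv, hve, hvl⟩ := ih b (by omega)
      refine ⟨u ++ v, ?_, S.eval_append u v a b p hue hve hab, ?_⟩
      · intro x hx
        rcases List.mem_append.mp hx with h | h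
        · exact hu x h
        · exact hv x h
      · simp only [List.length_append]; omega

end AtomicPartialProduct

namespace PreGarside

variable {P : Type*} (G : PreGarside P)

/-- Axiom (v) packaged: joinability of two one-atom extensions of `a`. -/
lemma join_step (hAt : ∀ s ∈ G.toAtomicPartialProduct.atoms, ∀ t ∈ G.toAtomicPartialProduct.atoms,
      ∃ m : P, G.toAtomicPartialProduct.leftDvd s m ∧ G.toAtomicPartialProduct.leftDvd t m)
    {s t a a₁ a₂ : P} (hs : s ∈ G.toAtomicPartialProduct.atoms)
    (ht : t ∈ G.toAtomicPartialProduct.atoms)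
    (h1 : G.toAtomicPartialProduct.mul a s = some a₁)
    (h2 : G.toAtomicPartialProduct.mul a t = some a₂) :
    ∃ e, G.toAtomicPartialProduct.leftDvd a₁ e ∧ G.toAtomicPartialProduct.leftDvd a₂ e := by
  set S := G.toAtomicPartialProduct with hS
  obtain ⟨Δ, hΔ⟩ := G.lcm_right s hs t ht (hAt s hs t ht)
  have hdef := G.mul_lcm_defined s hs t ht Δ a hΔ (by rw [h1]; rfl) (by rw [h2]; rfl)
  obtain ⟨e, he⟩ := Option.isSome_iff_exists.mp hdef
  obtain ⟨u, hu⟩ := hΔ.1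
  obtain ⟨v, hv⟩ := hΔ.2.1
  obtain ⟨as, has, hase⟩ := S.assoc₂ hu he
  obtain ⟨at', hat, hate⟩ := S.assoc₂ hv he
  rw [h1] at has
  rw [h2] at hat
  obtain rfl : a₁ = as := Option.some.inj has
  obtain rfl : a₂ = at' := Option.some.inj hat
  exact ⟨e, ⟨u, hase⟩, ⟨v, hate⟩⟩

/-- Newman's lemma specialised: confluence of left-divisibility. -/
lemma confluent (hAt : ∀ s ∈ G.toAtomicPartialProduct.atoms, ∀ t ∈ G.toAtomicPartialProduct.atoms,
      ∃ m : P, G.toAtomicPartialProduct.leftDvd s m ∧ G.toAtomicPartialProduct.leftDvd t m)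
    (N : ℕ) (hN : ∀ p : P, G.toAtomicPartialProduct.len p ≤ N) :
    ∀ n (a b c : P), N - G.toAtomicPartialProduct.len a ≤ n →
      G.toAtomicPartialProduct.leftDvd a b → G.toAtomicPartialProduct.leftDvd a c →
      ∃ d, G.toAtomicPartialProduct.leftDvd b d ∧ G.toAtomicPartialProduct.leftDvd c d := by
  set S := G.toAtomicPartialProduct with hS
  intro n
  induction n with
  | zero =>
    intro a b c hn hab hac
    have hb : b = a := S.eq_of_leftDvd_of_len_le hab (by have := hN b; omega)
    have hc : c = a := S.eq_of_leftDvd_of_len_le hac (by have := hN c; omega)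
    cases hb; cases hc
    exact ⟨_, S.leftDvd_refl _, S.leftDvd_refl _⟩
  | succ n ih =>
    intro a b c hn hab hac
    by_cases hba : b = a
    · subst hba
      exact ⟨c, hac, S.leftDvd_refl c⟩
    by_cases hca : c = a
    · subst hca
      exact ⟨b, S.leftDvd_refl b, hab⟩
    obtain ⟨s, hs, a₁, ha₁, ha₁b⟩ := S.exists_atom_step hab hba
    obtain ⟨t, ht, a₂, ha₂, ha₂c⟩ := S.exists_atom_step hac hca
    obtain ⟨e, ha₁e, ha₂e⟩ := G.join_step hAt hs ht ha₁ ha₂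
    have hlen1 : S.len a < S.len a₁ := by
      have := S.len_mul a s a₁ ha₁
      have := S.len_pos s hs.1
      omega
    have hlen2 : S.len a < S.len a₂ := by
      have := S.len_mul a t a₂ ha₂
      have := S.len_pos t ht.1
      omega
    obtain ⟨f, hbf, hef⟩ := ih a₁ b e (by have := hN a₁; omega) ha₁b ha₁e
    obtain ⟨d, hcd, hfd⟩ := ih a₂ c f (by have := hN a₂; omega) ha₂c
      (S.leftDvd_trans ha₂e hef)
    exact ⟨d, S.leftDvd_trans hbf hfd, hcd⟩

end PreGarside

/-- The elements of `P` have a common right multiple iff `P` is finite and every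
pair of atoms has a common right multiple in `P`. -/
theorem exists_delta_iff {P : Type*} (G : PreGarside P) :
    (∃ Δ : P, ∀ a : P, G.toAtomicPartialProduct.leftDvd a Δ) ↔
    (Finite P ∧ ∀ s ∈ G.toAtomicPartialProduct.atoms, ∀ t ∈ G.toAtomicPartialProduct.atoms,
      ∃ m : P, G.toAtomicPartialProduct.leftDvd s m ∧ G.toAtomicPartialProduct.leftDvd t m) := by
  set S := G.toAtomicPartialProduct with hS
  constructor
  · rintro ⟨Δ, hΔ⟩
    refine ⟨?_, fun s _ t _ => ⟨Δ, hΔ s, hΔ t⟩⟩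
    -- finiteness of `P`
    have hbound : ∀ p : P, S.len p ≤ S.len Δ := fun p => S.len_le_of_leftDvd (hΔ p)
    haveI : Finite ↥S.atoms := S.atoms_finite
    set N := S.len Δ with hN
    have hw : ∀ p : P, ∃ w : List ↥S.atoms,
        S.eval (w.map Subtype.val) = some p ∧ w.length ≤ N := by
      intro p
      obtain ⟨w, hwa, hwe, hwl⟩ := S.exists_word (S.len p) p le_rfl
      refine ⟨w.attach.map (fun x => ⟨x.1, hwa x.1 x.2⟩), ?_, ?_⟩
      · simpa [List.map_map, Function.comp] using hwe
      · simpa using le_trans hwl (hbound p)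
    choose f hf hfl using hw
    haveI : Finite ↥{l : List ↥S.atoms | l.length ≤ N} :=
      (List.finite_length_le ↥S.atoms N).to_subtype
    refine Finite.of_injective (fun p => (⟨f p, hfl p⟩ : {l : List ↥S.atoms | l.length ≤ N}))
      fun p q hpq => ?_
    have hfeq : f p = f q := congrArg Subtype.val hpq
    have h1 := hf p
    rw [hfeq, hf q] at h1
    exact (Option.some.inj h1).symm
  · rintro ⟨hFin, hAt⟩
    -- choose an element of maximal length
    haveI : Fintype P := Fintype.ofFinite P
    obtain ⟨Δ, -, hΔmax⟩ := Finset.exists_max_image (Finset.univ : Finset P) S.len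
      ⟨S.one, Finset.mem_univ _⟩
    have hN : ∀ p : P, S.len p ≤ S.len Δ := fun p => hΔmax p (Finset.mem_univ p)
    refine ⟨Δ, fun a => ?_⟩
    obtain ⟨d, had, hΔd⟩ := G.confluent hAt (S.len Δ) hN (S.len Δ) S.one a Δ
      (by simp [S.len_one]) (S.one_leftDvd a) (S.one_leftDvd Δ)
    have hdΔ : d = Δ := S.eq_of_leftDvd_of_len_le hΔd (hN d)
    rw [hdΔ] at had
    exact had
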